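/- arXiv:2508.14670 — 2 statements merged into one kernel-verified Lean document; each statement's English description precedes it below -/
import Mathlib

section
/- Let ω = e^{2πi/3}. If x is an element of the ring ℤ[1/3, ω] with |x| = 1, then x = (-ω)^t for some t ∈ {0, 1, 2, 3, 4, 5}. -/
/-!
Clearing denominators, `3ⁿ x = a + bω` with `a, b ∈ ℤ`, and `|x| = 1` becomes
`a² - ab + b² = 9ⁿ`. Modulo 9 this norm form vanishes only when `3 ∣ a` and `3 ∣ b`, so
descending `n` times shows `x` itself is an Eisenstein integer of norm one, i.e. one of the
six units `±1, ±ω, ±ω²`.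
-/

noncomputable def ω : ℂ := Complex.exp (2 * Real.pi * Complex.I / 3)

open ComplexConjugate

lemma isPrimitiveRoot_ω : IsPrimitiveRoot ω 3 := by
  simpa [ω] using Complex.isPrimitiveRoot_exp 3 (by norm_num)

lemma ω_pow_three : ω ^ 3 = 1 := isPrimitiveRoot_ω.pow_eq_one

lemma ω_sq_add_ω_add_one : ω ^ 2 + ω + 1 = 0 := by
  have h := isPrimitiveRoot_ω.geom_sum_eq_zero (by norm_num)
  simp only [Finset.sum_range_succ, Finset.sum_range_zero] at h
  linear_combination h

lemma conj_ω : conj ω = ω ^ 2 := by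
  rw [← Complex.inv_eq_conj (isPrimitiveRoot_ω.norm'_eq_one (by norm_num))]
  exact inv_eq_of_mul_eq_one_right (by rw [← pow_succ']; exact ω_pow_three)

lemma normSq_intCast_add_intCast_mul_ω (a b : ℤ) :
    Complex.normSq (a + b * ω) = a ^ 2 - a * b + b ^ 2 := by
  have h : (Complex.normSq (a + b * ω) : ℂ) = a ^ 2 - a * b + b ^ 2 := by
    rw [← Complex.mul_conj, map_add, map_mul, map_intCast, map_intCast, conj_ω]
    linear_combination (a * b : ℂ) * ω_sq_add_ω_add_one + (b : ℂ) ^ 2 * ω_pow_three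
  exact_mod_cast h

lemma three_dvd_of_nine_dvd_sq_sub_mul_add_sq {a b : ℤ} (h : 9 ∣ a ^ 2 - a * b + b ^ 2) :
    3 ∣ a ∧ 3 ∣ b := by
  have hmod : ∀ x y : ZMod 9, x ^ 2 - x * y + y ^ 2 = 0 → 3 * x = 0 ∧ 3 * y = 0 := by decide
  have h9 := (ZMod.intCast_zmod_eq_zero_iff_dvd _ 9).2 h
  push_cast at h9
  obtain ⟨ha, hb⟩ := hmod _ _ h9
  have ha' := (ZMod.intCast_zmod_eq_zero_iff_dvd (3 * a) 9).1 (by push_cast; exact ha)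
  have hb' := (ZMod.intCast_zmod_eq_zero_iff_dvd (3 * b) 9).1 (by push_cast; exact hb)
  omega

lemma three_pow_dvd_of_sq_sub_mul_add_sq_eq_nine_pow (n : ℕ) {a b : ℤ}
    (h : a ^ 2 - a * b + b ^ 2 = 9 ^ n) : 3 ^ n ∣ a ∧ 3 ^ n ∣ b := by
  induction n generalizing a b with
  | zero => simp
  | succ n ih =>
    obtain ⟨⟨a, rfl⟩, ⟨b, rfl⟩⟩ :=
      three_dvd_of_nine_dvd_sq_sub_mul_add_sq (h ▸ dvd_pow_self 9 n.succ_ne_zero)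
    have h₀ : a ^ 2 - a * b + b ^ 2 = 9 ^ n :=
      mul_left_cancel₀ (by norm_num : (9 : ℤ) ≠ 0) (by linear_combination h)
    obtain ⟨ha, hb⟩ := ih h₀
    rw [pow_succ']
    exact ⟨mul_dvd_mul_left 3 ha, mul_dvd_mul_left 3 hb⟩

lemma eq_of_sq_sub_mul_add_sq_eq_one {a b : ℤ} (h : a ^ 2 - a * b + b ^ 2 = 1) :
    (a = 1 ∧ b = 0) ∨ (a = -1 ∧ b = 0) ∨ (a = 0 ∧ b = 1) ∨ (a = 0 ∧ b = -1) ∨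
    (a = 1 ∧ b = 1) ∨ (a = -1 ∧ b = -1) := by
  -- `4(a² - ab + b²) = (2a - b)² + 3b² = (2b - a)² + 3a²`
  have ha1 : -1 ≤ a := by nlinarith [sq_nonneg (a - 2 * b), sq_nonneg (a + 1)]
  have ha2 : a ≤ 1 := by nlinarith [sq_nonneg (a - 2 * b), sq_nonneg (a - 1)]
  have hb1 : -1 ≤ b := by nlinarith [sq_nonneg (b - 2 * a), sq_nonneg (b + 1)]
  have hb2 : b ≤ 1 := by nlinarith [sq_nonneg (b - 2 * a), sq_nonneg (b - 1)]
  interval_cases a <;> interval_cases b <;> omega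

lemma exists_neg_ω_pow_eq {a b : ℤ} (h : a ^ 2 - a * b + b ^ 2 = 1) :
    ∃ t : Fin 6, (a + b * ω : ℂ) = (-ω) ^ (t : ℕ) := by
  rcases eq_of_sq_sub_mul_add_sq_eq_one h with
    ⟨rfl, rfl⟩ | ⟨rfl, rfl⟩ | ⟨rfl, rfl⟩ | ⟨rfl, rfl⟩ | ⟨rfl, rfl⟩ | ⟨rfl, rfl⟩
  · exact ⟨0, by simp⟩
  · exact ⟨3, show _ = (-ω) ^ 3 by push_cast; linear_combination ω_pow_three⟩
  · exact ⟨4, show _ = (-ω) ^ 4 by push_cast; linear_combination -ω * ω_pow_three⟩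
  · exact ⟨1, show _ = (-ω) ^ 1 by push_cast; ring⟩
  · exact ⟨5, show _ = (-ω) ^ 5 by
      push_cast; linear_combination ω_sq_add_ω_add_one + ω ^ 2 * ω_pow_three⟩
  · exact ⟨2, show _ = (-ω) ^ 2 by push_cast; linear_combination -ω_sq_add_ω_add_one⟩

noncomputable def eisensteinAwayThree : Subring ℂ where
  carrier := {z | ∃ n : ℕ, ∃ a b : ℤ, 3 ^ n * z = a + b * ω}
  zero_mem' := ⟨0, 0, 0, by simp⟩
  one_mem' := ⟨0, 1, 0, by simp⟩
  add_mem' := by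
    rintro z w ⟨m, a, b, hz⟩ ⟨n, c, d, hw⟩
    refine ⟨m + n, a * 3 ^ n + c * 3 ^ m, b * 3 ^ n + d * 3 ^ m, ?_⟩
    push_cast
    linear_combination (3 : ℂ) ^ n * hz + (3 : ℂ) ^ m * hw
  neg_mem' := by
    rintro z ⟨n, a, b, hz⟩
    exact ⟨n, -a, -b, by push_cast; linear_combination -hz⟩
  mul_mem' := by
    rintro z w ⟨m, a, b, hz⟩ ⟨n, c, d, hw⟩
    refine ⟨m + n, a * c - b * d, a * d + b * c - b * d, ?_⟩
    push_cast
    linear_combination (3 : ℂ) ^ n * w * hz + (a + b * ω) * hw + b * d * ω_sq_add_ω_add_one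

lemma closure_le_eisensteinAwayThree :
    Subring.closure ({(3 : ℂ)⁻¹, ω} : Set ℂ) ≤ eisensteinAwayThree := by
  rw [Subring.closure_le]
  rintro z (rfl | rfl)
  · exact ⟨1, 1, 0, by norm_num⟩
  · exact ⟨0, 0, 1, by simp⟩

lemma exists_sq_sub_mul_add_sq_eq_one_of_norm_eq_one {x : ℂ} (hx : x ∈ eisensteinAwayThree)
    (habs : ‖x‖ = 1) : ∃ a b : ℤ, x = a + b * ω ∧ a ^ 2 - a * b + b ^ 2 = 1 := by
  obtain ⟨n, a, b, hab⟩ := hx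
  have hnorm : a ^ 2 - a * b + b ^ 2 = 9 ^ n := by
    have h : Complex.normSq (3 ^ n * x) = 9 ^ n := by
      rw [Complex.normSq_eq_norm_sq, norm_mul, habs, norm_pow, mul_one, ← pow_mul, mul_comm,
        pow_mul]
      norm_num
    rw [hab, normSq_intCast_add_intCast_mul_ω] at h
    exact_mod_cast h
  obtain ⟨⟨a', rfl⟩, ⟨b', rfl⟩⟩ := three_pow_dvd_of_sq_sub_mul_add_sq_eq_nine_pow n hnorm
  have h3 : (3 : ℂ) ^ n ≠ 0 := pow_ne_zero _ (by norm_num)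
  refine ⟨a', b', mul_left_cancel₀ h3 ?_, ?_⟩
  · rw [hab]; push_cast; ring
  · have h93 : (9 : ℤ) ^ n = (3 ^ n) ^ 2 := by rw [← pow_mul, mul_comm, pow_mul]; norm_num
    refine mul_left_cancel₀ (pow_ne_zero n (by norm_num : (9 : ℤ) ≠ 0)) ?_
    linear_combination hnorm + (a' ^ 2 - a' * b' + b' ^ 2) * h93

theorem stmt_2 (x : ℂ) (hx : x ∈ Subring.closure ({(3 : ℂ)⁻¹, ω} : Set ℂ))
    (habs : ‖x‖ = 1) : ∃ t : Fin 6, x = (-ω) ^ (t : ℕ) := by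
  obtain ⟨a, b, rfl, hab⟩ :=
    exists_sq_sub_mul_add_sq_eq_one_of_norm_eq_one (closure_le_eisensteinAwayThree hx) habs
  exact exists_neg_ω_pow_eq hab
end

section
/- Let U be a unitary on ℂ^{n₁} ⊗ ℂ^{n₂} and U₁ a unitary on ℂ^{n₁} such that U (A ⊗ I) U† = (U₁ A U₁†) ⊗ I for all A ∈ M_{n₁}(ℂ). Then there exists a unitary U₂ on ℂ^{n₂} such that U = U₁ ⊗ U₂. -/
/-!
The hypothesis says that `U` and `U₁ ⊗ I` induce the same conjugation on `M_{n₁} ⊗ I`, so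
`V = (U₁ ⊗ I)† U` commutes with `M_{n₁} ⊗ I`. The commutant of `M_{n₁} ⊗ I` is `I ⊗ M_{n₂}`
(test commutation against the matrix units `E_{k i₀} ⊗ I`), hence `V = I ⊗ U₂`, which gives
`U = U₁ ⊗ U₂`; and `U₂` is unitary because `V` is.
-/

open Matrix

open Kronecker

theorem Unitary.star_mul_mul_eq_mul_star_mul {M : Type*} [Monoid M] [StarMul M] {u v x y : M}
    (hu : u ∈ unitary M) (hv : v ∈ unitary M) (h : u * x * star u = v * y * star v) :
    star v * u * x = y * (star v * u) :=
  calc star v * u * x = star v * (u * x * star u) * u := by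
        simp only [mul_assoc, Unitary.star_mul_self_of_mem hu, mul_one]
    _ = y * (star v * u) := by
        rw [h]; simp only [← mul_assoc, Unitary.star_mul_self_of_mem hv, one_mul]

namespace Matrix

variable {m n R : Type*}

theorem exists_eq_one_kronecker_of_forall_commute [Fintype m] [Fintype n] [DecidableEq m]
    [DecidableEq n] [CommSemiring R] {V : Matrix (m × n) (m × n) R}
    (hV : ∀ A : Matrix m m R, Commute V (A ⊗ₖ 1)) : ∃ W : Matrix n n R, V = 1 ⊗ₖ W := by
  cases isEmpty_or_nonempty m with
  | inl _ => exact ⟨0, Subsingleton.elim _ _⟩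
  | inr _ =>
    obtain ⟨i₀⟩ := ‹Nonempty m›
    refine ⟨of fun b d => V (i₀, b) (i₀, d), ?_⟩
    ext ⟨a, b⟩ ⟨k, d⟩
    have := congr_fun₂ (hV (single k i₀ 1)).eq (a, b) (i₀, d)
    simpa [mul_apply, single, one_apply, Fintype.sum_prod_type, ite_and, eq_comm] using this

theorem one_kronecker_injective [DecidableEq m] [MulZeroOneClass R] [Nonempty m] :
    Function.Injective fun W : Matrix n n R => (1 : Matrix m m R) ⊗ₖ W := by
  intro W W' h
  obtain ⟨i₀⟩ := ‹Nonempty m›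
  ext b d
  simpa using congr_fun₂ h (i₀, b) (i₀, d)

theorem mem_unitaryGroup_of_one_kronecker_mem [Fintype m] [Fintype n] [DecidableEq m]
    [DecidableEq n] [CommRing R] [StarRing R] [Nonempty m]
    {W : Matrix n n R} (h : (1 : Matrix m m R) ⊗ₖ W ∈ unitaryGroup (m × n) R) :
    W ∈ unitaryGroup n R := by
  rw [mem_unitaryGroup_iff'] at h ⊢
  apply one_kronecker_injective (m := m)
  simpa [star_eq_conjTranspose, conjTranspose_kronecker, ← mul_kronecker_mul] using h

end Matrix

theorem stmt_16 (n₁ n₂ : ℕ)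
    (U : Matrix (Fin n₁ × Fin n₂) (Fin n₁ × Fin n₂) ℂ)
    (U₁ : Matrix (Fin n₁) (Fin n₁) ℂ)
    (hU : U ∈ Matrix.unitaryGroup (Fin n₁ × Fin n₂) ℂ)
    (hU₁ : U₁ ∈ Matrix.unitaryGroup (Fin n₁) ℂ)
    (h : ∀ A : Matrix (Fin n₁) (Fin n₁) ℂ,
      U * (A ⊗ₖ (1 : Matrix (Fin n₂) (Fin n₂) ℂ)) * Uᴴ =
        (U₁ * A * U₁ᴴ) ⊗ₖ (1 : Matrix (Fin n₂) (Fin n₂) ℂ)) :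
    ∃ U₂ : Matrix (Fin n₂) (Fin n₂) ℂ,
      U₂ ∈ Matrix.unitaryGroup (Fin n₂) ℂ ∧ U = U₁ ⊗ₖ U₂ := by
  cases isEmpty_or_nonempty (Fin n₁) with
  | inl _ => exact ⟨1, one_mem _, Subsingleton.elim _ _⟩
  | inr _ =>
    set U₁' := U₁ ⊗ₖ (1 : Matrix (Fin n₂) (Fin n₂) ℂ)
    have hU₁' : U₁' ∈ unitaryGroup (Fin n₁ × Fin n₂) ℂ := kronecker_mem_unitary hU₁ (one_mem _)
    have hcomm (A : Matrix (Fin n₁) (Fin n₁) ℂ) : Commute (star U₁' * U) (A ⊗ₖ 1) := by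
      refine Unitary.star_mul_mul_eq_mul_star_mul hU hU₁' ?_
      simpa [U₁', star_eq_conjTranspose, conjTranspose_kronecker, ← mul_kronecker_mul] using h A
    obtain ⟨U₂, hU₂⟩ := exists_eq_one_kronecker_of_forall_commute hcomm
    refine ⟨U₂, mem_unitaryGroup_of_one_kronecker_mem (m := Fin n₁) ?_, ?_⟩
    · rw [← hU₂]; exact mul_mem (Unitary.star_mem hU₁') hU
    · calc U = U₁' * (star U₁' * U) := by
            rw [← mul_assoc, Unitary.mul_star_self_of_mem hU₁', one_mul]
        _ = U₁ ⊗ₖ U₂ := by rw [hU₂, ← mul_kronecker_mul, mul_one, one_mul]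
end
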